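/- Let β > 0, a ∈ ℝ, and let s > 0 satisfy s^β > |a|. Then ∫_0^∞ e^(-st) E_β(-a t^β) dt = s^(β-1) / (s^β + a), and in particular the integral converges absolutely. -/

import Mathlib

/-!
Expanding `E_β(-a t^β)` in its power series, Euler's integral gives the Laplace transform
`Γ(βk + 1) / s^(βk + 1)` of each `t^(βk)`, so the transform of the series is the geometric series
`∑ (-a)^k / s^(βk + 1) = s^(β - 1) / (s^β + a)`. Because `|a| < s^β`, the same computation with
`|a|` shows that the integrals of the absolute values of the terms are summable, which justifies
integrating termwise and gives absolute integrability.
-/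

open MeasureTheory Real

/-- The two-parameter Mittag-Leffler function `E_{α,β}(x) = ∑_{k=0}^∞ x^k / Γ(αk + β)`;
the one-parameter function is `E_β = E_{β,1}`. -/
noncomputable def mittagLeffler (α β x : ℝ) : ℝ :=
  ∑' k : ℕ, x ^ k / Real.Gamma (α * k + β)

open Set

namespace MeasureTheory

variable {α E : Type*} [MeasurableSpace α] {μ : Measure α} [NormedAddCommGroup E] [CompleteSpace E]

theorem integrable_tsum_of_summable_integral_norm {F : ℕ → α → E}
    (hF_int : ∀ i, Integrable (F i) μ) (hF_sum : Summable fun i ↦ ∫ a, ‖F i a‖ ∂μ) :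
    Integrable (fun a ↦ ∑' i, F i a) μ := by
  have hF_meas (i : ℕ) : AEMeasurable (fun a ↦ ‖F i a‖ₑ) μ := (hF_int i).1.enorm
  have hlint : ∫⁻ a, ∑' i, ‖F i a‖ₑ ∂μ ≠ ⊤ := by
    rw [lintegral_tsum hF_meas]
    simp_rw [← ofReal_integral_norm_eq_lintegral_enorm (hF_int _)]
    rw [← ENNReal.ofReal_tsum_of_nonneg (fun i ↦ integral_nonneg fun a ↦ norm_nonneg _) hF_sum]
    exact ENNReal.ofReal_ne_top
  have hsum : ∀ᵐ a ∂μ, Summable fun i ↦ F i a := by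
    filter_upwards [ae_lt_top' (AEMeasurable.tsum hF_meas) hlint] with a ha
    exact (tsum_enorm_ne_top_iff_summable_norm.1 ha.ne).of_norm
  refine ⟨aestronglyMeasurable_of_tendsto_ae Filter.atTop
    (fun n ↦ Finset.aestronglyMeasurable_sum (Finset.range n) fun i _ ↦ (hF_int i).1) ?_, ?_⟩
  · filter_upwards [hsum] with a ha
    simpa only [Finset.sum_apply] using ha.hasSum.tendsto_sum_nat
  · exact (lintegral_mono fun a ↦ enorm_tsum_le_tsum_enorm).trans_lt hlint.lt_top

end MeasureTheory

section Laplace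

variable {s : ℝ}

theorem integrableOn_exp_neg_mul_mul_rpow {p : ℝ} (hp : -1 < p) (hs : 0 < s) :
    IntegrableOn (fun t ↦ exp (-s * t) * t ^ p) (Ioi 0) := by
  refine (integrableOn_rpow_mul_exp_neg_mul_rpow hp one_pos hs).congr_fun (fun t _ ↦ ?_)
    measurableSet_Ioi
  simp only [rpow_one, mul_comm]

theorem integral_exp_neg_mul_mul_rpow {p : ℝ} (hp : -1 < p) (hs : 0 < s) :
    ∫ t in Ioi 0, exp (-s * t) * t ^ p = Gamma (p + 1) / s ^ (p + 1) := by
  have := integral_rpow_mul_exp_neg_mul_Ioi (a := p + 1) (by linarith) hs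
  rw [add_sub_cancel_right, one_div, inv_rpow hs.le] at this
  rw [← inv_mul_eq_div, ← this]
  simp only [neg_mul, mul_comm (exp _)]

theorem integrableOn_and_hasSum_laplace_rpow_series {β : ℝ} (hβ : 0 ≤ β) (hs : 0 < s)
    {c : ℕ → ℝ}
    (hc : Summable fun k : ℕ ↦ |c k| * Gamma (β * k + 1) / s ^ (β * k + 1)) :
    IntegrableOn (fun t ↦ exp (-s * t) * ∑' k : ℕ, c k * t ^ (β * k)) (Ioi 0) ∧
    HasSum (fun k : ℕ ↦ c k * Gamma (β * k + 1) / s ^ (β * k + 1))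
      (∫ t in Ioi 0, exp (-s * t) * ∑' k : ℕ, c k * t ^ (β * k)) := by
  set F : ℕ → ℝ → ℝ := fun k t ↦ c k * (exp (-s * t) * t ^ (β * k))
  have hp (k : ℕ) : -1 < β * k := neg_one_lt_zero.trans_le (by positivity)
  have hF_int (k : ℕ) : IntegrableOn (F k) (Ioi 0) :=
    (integrableOn_exp_neg_mul_mul_rpow (hp k) hs).const_mul _
  have hF_norm (k : ℕ) : ∫ t in Ioi 0, ‖F k t‖ = |c k| * Gamma (β * k + 1) / s ^ (β * k + 1) := by
    have hF_abs : EqOn (‖F k ·‖) (fun t ↦ |c k| * (exp (-s * t) * t ^ (β * k))) (Ioi 0) :=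
      fun t ht ↦ by simp [F, abs_of_nonneg (rpow_nonneg (le_of_lt ht) _)]
    rw [setIntegral_congr_fun measurableSet_Ioi hF_abs, integral_const_mul,
      integral_exp_neg_mul_mul_rpow (hp k) hs, mul_div_assoc]
  have hF_sum : (fun t ↦ exp (-s * t) * ∑' k : ℕ, c k * t ^ (β * k)) = fun t ↦ ∑' k, F k t := by
    funext t
    rw [← tsum_mul_left]
    exact tsum_congr fun k ↦ by ring
  simp_rw [← hF_norm] at hc
  rw [hF_sum]
  refine ⟨integrable_tsum_of_summable_integral_norm hF_int hc, ?_⟩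
  have hF_integral (k : ℕ) :
      ∫ t in Ioi 0, F k t = c k * Gamma (β * k + 1) / s ^ (β * k + 1) := by
    rw [integral_const_mul, integral_exp_neg_mul_mul_rpow (hp k) hs, mul_div_assoc]
  simpa only [hF_integral] using hasSum_integral_of_summable_integral_norm hF_int hc

end Laplace

theorem mittagLeffler_mul_rpow (β x : ℝ) {t : ℝ} (ht : 0 ≤ t) :
    mittagLeffler β 1 (x * t ^ β) = ∑' k : ℕ, x ^ k / Gamma (β * k + 1) * t ^ (β * k) := by
  refine tsum_congr fun k ↦ ?_
  rw [mul_pow, rpow_mul ht, rpow_natCast]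
  ring

theorem hasSum_pow_div_rpow {β s x : ℝ} (hs : 0 < s) (hx : |x| < s ^ β) :
    HasSum (fun k : ℕ ↦ x ^ k / s ^ (β * k + 1)) (s ^ (β - 1) / (s ^ β - x)) := by
  have hsβ : 0 < s ^ β := rpow_pos_of_pos hs β
  have hratio : |x / s ^ β| < 1 := by rwa [abs_div, abs_of_pos hsβ, div_lt_one hsβ]
  have hterm (k : ℕ) : x ^ k / s ^ (β * k + 1) = s⁻¹ * (x / s ^ β) ^ k := by
    rw [rpow_add hs, rpow_one, rpow_mul hs.le, rpow_natCast, div_pow]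
    field_simp
  have hsum : s⁻¹ * (1 - x / s ^ β)⁻¹ = s ^ (β - 1) / (s ^ β - x) := by
    have : s ^ β - x ≠ 0 := by linarith [le_abs_self x]
    rw [rpow_sub_one hs.ne']
    field_simp
  simpa only [hterm, hsum] using (hasSum_geometric_of_abs_lt_one hratio).mul_left s⁻¹

/-- Laplace transform of `t ↦ E_β(-a t^β)`:
it is absolutely integrable and equals `s^(β-1) / (s^β + a)` for `s^β > |a|`. -/
theorem laplace_mittagLeffler_one_param (β a s : ℝ) (hβ : 0 < β)
    (hs : 0 < s) (hsa : |a| < s ^ β) :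
    IntegrableOn
      (fun t : ℝ => Real.exp (-s * t) * mittagLeffler β 1 (-a * t ^ β)) (Set.Ioi 0) ∧
    ∫ t in Set.Ioi (0:ℝ), Real.exp (-s * t) * mittagLeffler β 1 (-a * t ^ β)
      = s ^ (β - 1) / (s ^ β + a) := by
  have hΓ (k : ℕ) : 0 < Gamma (β * k + 1) := Gamma_pos_of_pos (by positivity)
  have hcoef (x : ℝ) (k : ℕ) : x ^ k / Gamma (β * k + 1) * Gamma (β * k + 1) / s ^ (β * k + 1) =
      x ^ k / s ^ (β * k + 1) := by
    rw [div_mul_cancel₀ _ (hΓ k).ne']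
  obtain ⟨hint, hsum⟩ := integrableOn_and_hasSum_laplace_rpow_series hβ.le hs
    (c := fun k ↦ (-a) ^ k / Gamma (β * k + 1))
    (by simpa only [abs_div, abs_pow, abs_neg, abs_of_pos (hΓ _), hcoef]
      using (hasSum_pow_div_rpow hs (by rwa [abs_abs])).summable)
  have hE : EqOn (fun t ↦ exp (-s * t) * mittagLeffler β 1 (-a * t ^ β))
      (fun t ↦ exp (-s * t) * ∑' k : ℕ, (-a) ^ k / Gamma (β * k + 1) * t ^ (β * k)) (Ioi 0) :=
    fun t ht ↦ by simp only [mittagLeffler_mul_rpow β (-a) (le_of_lt ht)]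
  refine ⟨hint.congr_fun hE.symm measurableSet_Ioi, ?_⟩
  rw [setIntegral_congr_fun measurableSet_Ioi hE, ← sub_neg_eq_add]
  refine hsum.unique ?_
  simpa only [hcoef] using hasSum_pow_div_rpow hs (by rwa [abs_neg])
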